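/- arXiv:2211.02255 — 4 statements merged into one kernel-verified Lean document; each statement's English description precedes it below -/
import Mathlib

section
/- Let S = Σ_{k=0}^∞ α_k be an absolutely convergent series of real numbers, and let τ be a random variable with values in the nonnegative integers such that P(τ ≥ n) > 0 for all n. Then the Russian Roulette estimator Ŝ := Σ_{i=0}^τ α_i / P(τ ≥ i) satisfies E[Ŝ] = S. -/
/-!
Summing the array `(i, t) ↦ p t * α i / P(τ ≥ i)` over the triangle `i ≤ t` by columns gives the
expectation of the estimator, and by rows gives `∑ i, (α i / P(τ ≥ i)) * ∑_{t ≥ i} p t = ∑ i, α i`.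
Since `p ≥ 0`, the absolute row sums are `|α i|`, so the array is absolutely summable and the two
orders of summation agree.
-/

open Finset

section TriangularSum

variable {p c tail : ℕ → ℝ}

def triangularArray (c p : ℕ → ℝ) (q : ℕ × ℕ) : ℝ :=
  if q.1 ≤ q.2 then c q.1 * p q.2 else 0

lemma hasSum_triangularArray_row
    (htail : ∀ n, HasSum (fun k => if n ≤ k then p k else 0) (tail n)) (i : ℕ) :
    HasSum (fun t => triangularArray c p (i, t)) (c i * tail i) := by
  simpa only [triangularArray, mul_ite, mul_zero] using (htail i).mul_left (c i)

lemma summable_triangularArray (hp : ∀ k, 0 ≤ p k)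
    (htail : ∀ n, HasSum (fun k => if n ≤ k then p k else 0) (tail n))
    (hc : Summable fun i => |c i| * tail i) :
    Summable (triangularArray c p) := by
  have habs_row : ∀ i, HasSum (fun t => |triangularArray c p (i, t)|) (|c i| * tail i) := by
    intro i
    convert hasSum_triangularArray_row (c := fun i => |c i|) htail i using 2 with t
    simp only [triangularArray]
    split_ifs <;> simp [abs_mul, abs_of_nonneg (hp t)]
  refine Summable.of_abs ((summable_prod_of_nonneg fun _ => abs_nonneg _).2 ⟨?_, ?_⟩)
  · exact fun i => (habs_row i).summable
  · simpa only [(habs_row _).tsum_eq] using hc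

lemma tsum_triangularArray_column (t : ℕ) :
    ∑' i, triangularArray c p (i, t) = p t * ∑ i ∈ range (t + 1), c i := by
  rw [tsum_eq_sum (s := range (t + 1)), mul_sum]
  · refine sum_congr rfl fun i hi => ?_
    rw [triangularArray, if_pos (Nat.lt_succ_iff.1 (mem_range.1 hi)), mul_comm]
  · intro i hi
    rw [triangularArray, if_neg (by simpa [Nat.lt_succ_iff] using hi)]

theorem tsum_mul_sum_range_eq_tsum_mul_tail (hp : ∀ k, 0 ≤ p k)
    (htail : ∀ n, HasSum (fun k => if n ≤ k then p k else 0) (tail n))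
    (hc : Summable fun i => |c i| * tail i) :
    ∑' t, p t * ∑ i ∈ range (t + 1), c i = ∑' i, c i * tail i := calc
  ∑' t, p t * ∑ i ∈ range (t + 1), c i = ∑' t, ∑' i, triangularArray c p (i, t) :=
    tsum_congr fun t => tsum_triangularArray_column t |>.symm
  _ = ∑' i, ∑' t, triangularArray c p (i, t) :=
    (summable_triangularArray hp htail hc).tsum_comm (f := fun i t => triangularArray c p (i, t))
  _ = ∑' i, c i * tail i := tsum_congr fun i => (hasSum_triangularArray_row htail i).tsum_eq

end TriangularSum

theorem russian_roulette_unbiased_general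
    (α : ℕ → ℝ) (hα : Summable (fun k => |α k|))
    (p : ℕ → ℝ) (hp0 : ∀ k, 0 ≤ p k)
    (tail : ℕ → ℝ) (htail : ∀ n, HasSum (fun k => if n ≤ k then p k else 0) (tail n))
    (htailpos : ∀ n, 0 < tail n) :
    ∑' t : ℕ, p t * (∑ i ∈ Finset.range (t + 1), α i / tail i) = ∑' k, α k := by
  have hweight : ∀ i, α i / tail i * tail i = α i := fun i => div_mul_cancel₀ _ (htailpos i).ne'
  have habs_weight : ∀ i, |α i / tail i| * tail i = |α i| := fun i => by
    rw [abs_div, abs_of_pos (htailpos i), div_mul_cancel₀ _ (htailpos i).ne']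
  rw [tsum_mul_sum_range_eq_tsum_mul_tail hp0 htail (by simpa only [habs_weight] using hα)]
  simp only [hweight]

/-- Russian Roulette estimator unbiasedness: if `S = ∑ α k` converges absolutely
and `τ` is an ℕ-valued random variable (with mass function `p`) whose tail
probabilities `P(τ ≥ n)` are all positive, then
`E[∑_{i=0}^τ α i / P(τ ≥ i)] = ∑ α k`. -/
theorem russian_roulette_unbiased
    (α : ℕ → ℝ) (hα : Summable (fun k => |α k|))
    (p : ℕ → ℝ) (hp0 : ∀ k, 0 ≤ p k) (hp1 : HasSum p 1)
    (tail : ℕ → ℝ) (htail : ∀ n, HasSum (fun k => if n ≤ k then p k else 0) (tail n))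
    (htailpos : ∀ n, 0 < tail n) :
    ∑' t : ℕ, p t * (∑ i ∈ Finset.range (t + 1), α i / tail i) = ∑' k, α k :=
  russian_roulette_unbiased_general α hα p hp0 tail htail htailpos
end

section
/- If f : Σ* → ℝ has Hankel matrix H_f of finite rank n, then every row of H_f lies in the span of n rows of H_f indexed by some prefixes p₁,…,p_n, and consequently the row of H_f indexed by uσ (for any u ∈ Σ*, σ ∈ Σ) is a linear combination of these basis rows with coefficients depending linearly on the row of u; this yields an n-state WFA computing f. -/
/-!
The Hankel rows `hankelRow f u = f (u ++ ·)` span a space `W` of dimension `n`, and shifting a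
row by a letter, `g ↦ g (a :: ·)`, sends `hankelRow f u` to `hankelRow f (u ++ [a])`; so `W` is
stable under every shift. In a basis of `W` made of rows `hankelRow f (p i)` the shifts become
matrices `A a`. Since `f u` is the value at `[]` of `hankelRow f u`, which is `hankelRow f []`
shifted along `u`, the WFA with initial vector the coordinates of `hankelRow f []`, transitions
`(A a)ᵀ` and final vector `(f (p i))ᵢ` computes `f`.
-/

open Matrix

noncomputable def wfaFun {σ : Type*} {n : ℕ} (α : Fin n → ℝ)
    (A : σ → Matrix (Fin n) (Fin n) ℝ) (ω : Fin n → ℝ) : List σ → ℝ :=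
  fun u => α ⬝ᵥ ((u.map A).prod *ᵥ ω)

section WFA

variable {σ : Type*} {n : ℕ}

@[simp]
theorem wfaFun_nil (α : Fin n → ℝ) (A : σ → Matrix (Fin n) (Fin n) ℝ) (ω : Fin n → ℝ) :
    wfaFun α A ω [] = α ⬝ᵥ ω := by
  simp [wfaFun]

@[simp]
theorem wfaFun_cons (α : Fin n → ℝ) (A : σ → Matrix (Fin n) (Fin n) ℝ) (ω : Fin n → ℝ)
    (a : σ) (u : List σ) : wfaFun α A ω (a :: u) = wfaFun (α ᵥ* A a) A ω u := by
  simp [wfaFun, dotProduct_mulVec, vecMul_vecMul, ← mulVec_mulVec]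

variable {V : Type*} [AddCommGroup V] [Module ℝ V]

theorem wfaFun_toMatrix (b : Module.Basis (Fin n) ℝ V) (T : σ → V →ₗ[ℝ] V) (φ : V →ₗ[ℝ] ℝ)
    (u : List σ) (x : V) :
    wfaFun (b.repr x) (fun a => (LinearMap.toMatrix b b (T a))ᵀ) (fun i => φ (b i)) u =
      φ (u.foldl (fun y a => T a y) x) := by
  induction u generalizing x with
  | nil =>
    simp only [wfaFun_nil, List.foldl_nil]
    conv_rhs => rw [← b.sum_repr x]
    simp only [map_sum, map_smul, smul_eq_mul, dotProduct]
  | cons a u ih =>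
    rw [wfaFun_cons, vecMul_transpose, LinearMap.toMatrix_mulVec_repr, ih]
    rfl

theorem LinearMap.coe_foldl_restrict {W : Submodule ℝ V} (T : σ → V →ₗ[ℝ] V)
    (hT : ∀ a, ∀ x ∈ W, T a x ∈ W) (u : List σ) (x : W) :
    ((u.foldl (fun (y : W) a => (T a).restrict (hT a) y) x : W) : V) =
      u.foldl (fun y a => T a y) x := by
  induction u generalizing x with
  | nil => rfl
  | cons a u ih => exact ih _

theorem exists_wfaFun_eq_foldl {W : Submodule ℝ V} (b : Module.Basis (Fin n) ℝ W)
    (T : σ → V →ₗ[ℝ] V) (hT : ∀ a, ∀ x ∈ W, T a x ∈ W) (φ : V →ₗ[ℝ] ℝ) {x : V} (hx : x ∈ W) :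
    ∃ (α : Fin n → ℝ) (A : σ → Matrix (Fin n) (Fin n) ℝ) (ω : Fin n → ℝ),
      ∀ u, wfaFun α A ω u = φ (u.foldl (fun y a => T a y) x) := by
  refine ⟨_, _, _, fun u =>
    (wfaFun_toMatrix b (fun a => (T a).restrict (hT a)) (φ ∘ₗ W.subtype) u ⟨x, hx⟩).trans ?_⟩
  exact congrArg φ (LinearMap.coe_foldl_restrict T hT u ⟨x, hx⟩)

end WFA

theorem exists_fin_linearIndependent_span_eq {K V ι : Type*} [DivisionRing K] [AddCommGroup V]
    [Module K V] (v : ι → V) {n : ℕ}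
    (h : Module.rank K (Submodule.span K (Set.range v)) = n) :
    ∃ p : Fin n → ι, LinearIndependent K (v ∘ p) ∧
      Submodule.span K (Set.range (v ∘ p)) = Submodule.span K (Set.range v) := by
  obtain ⟨κ, a, -, hspan, hli⟩ := exists_linearIndependent' K v
  obtain ⟨e⟩ : Nonempty (κ ≃ Fin n) := by
    rw [← Cardinal.mk_eq_nat_iff, ← Cardinal.lift_eq_nat_iff, (Module.Basis.span hli).mk_eq_rank,
      hspan, h, Cardinal.lift_natCast]
  refine ⟨a ∘ e.symm, hli.comp e.symm e.symm.injective, ?_⟩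
  rw [← hspan, ← Function.comp_assoc, EquivLike.range_comp]

section Hankel

open Submodule

variable {σ R : Type*} [Semiring R]

def hankelRow (f : List σ → R) (u : List σ) : List σ → R := fun v => f (u ++ v)

theorem hankelRow_append_singleton (f : List σ → R) (u : List σ) (a : σ) :
    hankelRow f (u ++ [a]) = LinearMap.funLeft R R (List.cons a) (hankelRow f u) := by
  ext v
  simp [hankelRow, LinearMap.funLeft_apply]

theorem foldl_funLeft_cons_hankelRow (f : List σ → R) (w u : List σ) :
    u.foldl (fun g a => LinearMap.funLeft R R (List.cons a) g) (hankelRow f w) =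
      hankelRow f (w ++ u) := by
  induction u generalizing w with
  | nil => simp
  | cons a u ih =>
    rw [List.foldl_cons, ← hankelRow_append_singleton, ih, List.append_assoc,
      List.singleton_append]

theorem funLeft_cons_mem_span_hankelRow (f : List σ → R) (a : σ) :
    ∀ g ∈ span R (Set.range (hankelRow f)),
      LinearMap.funLeft R R (List.cons a) g ∈ span R (Set.range (hankelRow f)) := by
  refine span_le (p := (span R _).comap _) |>.mpr ?_
  rintro _ ⟨u, rfl⟩
  rw [SetLike.mem_coe, mem_comap, ← hankelRow_append_singleton]
  exact subset_span ⟨_, rfl⟩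

end Hankel

theorem wfa_of_finite_hankel_rank_general {σ : Type*} {n : ℕ}
    (f : List σ → ℝ)
    (hrank : Module.rank ℝ
      ↥(Submodule.span ℝ (Set.range fun u : List σ => fun v : List σ => f (u ++ v))) = n) :
    ∃ p : Fin n → List σ,
      Submodule.span ℝ (Set.range fun i : Fin n => fun v : List σ => f (p i ++ v)) =
        Submodule.span ℝ (Set.range fun u : List σ => fun v : List σ => f (u ++ v)) ∧
      ∃ (α : Fin n → ℝ) (A : σ → Matrix (Fin n) (Fin n) ℝ) (ω : Fin n → ℝ),
        ∀ u, f u = wfaFun α A ω u := by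
  obtain ⟨p, hli, hspan⟩ := exists_fin_linearIndependent_span_eq (hankelRow f) hrank
  refine ⟨p, hspan, ?_⟩
  have hinv := funLeft_cons_mem_span_hankelRow f
  have hf : hankelRow f [] ∈ Submodule.span ℝ (Set.range (hankelRow f)) :=
    Submodule.subset_span ⟨[], rfl⟩
  rw [← hspan] at hinv hf
  obtain ⟨α, A, ω, hwfa⟩ :=
    exists_wfaFun_eq_foldl (Module.Basis.span hli) _ hinv (LinearMap.proj []) hf
  refine ⟨α, A, ω, fun u => ?_⟩
  rw [hwfa, foldl_funLeft_cons_hankelRow]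
  simp [hankelRow]

/-- If the Hankel matrix of `f` has finite rank `n`, then there are `n` prefixes
`p₁, …, p_n` whose rows span all rows of the Hankel matrix, and `f` is computed
by an `n`-state WFA. -/
theorem wfa_of_finite_hankel_rank {σ : Type*} [Fintype σ] {n : ℕ}
    (f : List σ → ℝ)
    (hrank : Module.rank ℝ
      ↥(Submodule.span ℝ (Set.range fun u : List σ => fun v : List σ => f (u ++ v))) = n) :
    ∃ p : Fin n → List σ,
      Submodule.span ℝ (Set.range fun i : Fin n => fun v : List σ => f (p i ++ v)) =
        Submodule.span ℝ (Set.range fun u : List σ => fun v : List σ => f (u ++ v)) ∧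
      ∃ (α : Fin n → ℝ) (A : σ → Matrix (Fin n) (Fin n) ℝ) (ω : Fin n → ℝ),
        ∀ u, f u = wfaFun α A ω u :=
  wfa_of_finite_hankel_rank_general f hrank
end

section
/- For any function f : Σ* → ℝ, the rank of the Hankel matrix H_f is a lower bound on the number of states of any WFA computing f, and moreover there exists a WFA with exactly rank(H_f) states computing f whenever rank(H_f) is finite. Hence rank(H_f) equals the minimal number of states of a WFA computing f. -/
/-!
If `f` is computed by an `n`-state WFA `(α, A, ω)`, every Hankel row `v ↦ f (u ++ v)` is the
function computed from the initial vector `α A^u`, so the rows lie in the image of a linear map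
out of `ℝⁿ` and span at most `n` dimensions.

Conversely the span `V` of the Hankel rows is stable under the left shifts `g ↦ (v ↦ g (a :: v))`
and contains `f` itself (the row of the empty word). In a basis `b` of `V`, taking `A^a` to be
the (transposed) matrix of the shift by `a`, `ω` the values of the basis vectors at `[]`, and `α`
the coordinates of `f`, gives a WFA with `dim V` states computing `f`.
-/

open Matrix

/-- The rank of the Hankel matrix of `f` (dimension of the span of its rows). -/
noncomputable def hankelRank {σ : Type*} (f : List σ → ℝ) : Cardinal :=
  Module.rank ℝ
    ↥(Submodule.span ℝ (Set.range fun u : List σ => fun v : List σ => f (u ++ v)))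

section WFA

variable {σ : Type*} {n : ℕ}

theorem wfaFun_append (α : Fin n → ℝ) (A : σ → Matrix (Fin n) (Fin n) ℝ) (ω : Fin n → ℝ)
    (u v : List σ) : wfaFun α A ω (u ++ v) = wfaFun (α ᵥ* (u.map A).prod) A ω v := by
  simp only [wfaFun, List.map_append, List.prod_append, ← mulVec_mulVec, dotProduct_mulVec]

noncomputable def wfaFunLinearMap (A : σ → Matrix (Fin n) (Fin n) ℝ) (ω : Fin n → ℝ) :
    (Fin n → ℝ) →ₗ[ℝ] List σ → ℝ where
  toFun α := wfaFun α A ω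
  map_add' α β := by ext u; simp [wfaFun, add_dotProduct]
  map_smul' c α := by ext u; simp [wfaFun, smul_dotProduct]

def hankelSpan (f : List σ → ℝ) : Submodule ℝ (List σ → ℝ) :=
  Submodule.span ℝ (Set.range fun u v => f (u ++ v))

theorem hankelRank_eq_rank_hankelSpan (f : List σ → ℝ) :
    hankelRank f = Module.rank ℝ (hankelSpan f) :=
  rfl

theorem hankelSpan_wfaFun_le_range (α : Fin n → ℝ) (A : σ → Matrix (Fin n) (Fin n) ℝ)
    (ω : Fin n → ℝ) : hankelSpan (wfaFun α A ω) ≤ LinearMap.range (wfaFunLinearMap A ω) := by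
  rw [hankelSpan, Submodule.span_le]
  rintro _ ⟨u, rfl⟩
  exact ⟨α ᵥ* (u.map A).prod, funext fun v => (wfaFun_append α A ω u v).symm⟩

theorem hankelRank_wfaFun_le (α : Fin n → ℝ) (A : σ → Matrix (Fin n) (Fin n) ℝ)
    (ω : Fin n → ℝ) : hankelRank (wfaFun α A ω) ≤ n :=
  calc hankelRank (wfaFun α A ω)
      ≤ Module.rank ℝ (LinearMap.range (wfaFunLinearMap A ω)) :=
        Submodule.rank_mono (hankelSpan_wfaFun_le_range α A ω)
    _ ≤ n := by simpa using lift_rank_range_le (wfaFunLinearMap (σ := σ) A ω)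

theorem self_mem_hankelSpan (f : List σ → ℝ) : f ∈ hankelSpan f :=
  Submodule.subset_span ⟨[], rfl⟩

theorem funLeft_cons_mem_hankelSpan (f : List σ → ℝ) (a : σ) :
    ∀ g ∈ hankelSpan f, LinearMap.funLeft ℝ ℝ (List.cons a) g ∈ hankelSpan f := by
  suffices hankelSpan f ≤ (hankelSpan f).comap (LinearMap.funLeft ℝ ℝ (List.cons a)) from
    fun g hg => this hg
  rw [hankelSpan, Submodule.span_le]
  rintro _ ⟨u, rfl⟩
  exact Submodule.subset_span ⟨u ++ [a], funext fun v => by simp⟩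

theorem exists_wfaFun_eq_of_mem {V : Submodule ℝ (List σ → ℝ)}
    (hV : ∀ a : σ, ∀ g ∈ V, LinearMap.funLeft ℝ ℝ (List.cons a) g ∈ V)
    (b : Module.Basis (Fin n) ℝ V) {g : List σ → ℝ} (hg : g ∈ V) :
    ∃ (α : Fin n → ℝ) (A : σ → Matrix (Fin n) (Fin n) ℝ) (ω : Fin n → ℝ),
      g = wfaFun α A ω := by
  let shift a : V →ₗ[ℝ] V := (LinearMap.funLeft ℝ ℝ (List.cons a)).restrict (hV a)
  -- `wfaFun` multiplies by the transition matrices on the side of the initial row vector `α`.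
  let A a : Matrix (Fin n) (Fin n) ℝ := (LinearMap.toMatrix b b (shift a))ᵀ
  let ω : Fin n → ℝ := fun i => (b i : List σ → ℝ) []
  have eval_nil (h : V) : (h : List σ → ℝ) [] = b.repr h ⬝ᵥ ω :=
    calc (h : List σ → ℝ) [] = ((∑ i, b.repr h i • b i : V) : List σ → ℝ) [] := by
          rw [b.sum_repr]
      _ = b.repr h ⬝ᵥ ω := by
          simp only [Submodule.coe_sum, Submodule.coe_smul, Finset.sum_apply, Pi.smul_apply,
            smul_eq_mul, dotProduct, ω]
  have key (u : List σ) : ∀ h : V, (h : List σ → ℝ) u = wfaFun (b.repr h) A ω u := by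
    induction u with
    | nil => intro h; simpa [wfaFun] using eval_nil h
    | cons a u ih =>
      intro h
      have hshift : (h : List σ → ℝ) (a :: u) = (shift a h : List σ → ℝ) u := rfl
      rw [hshift, ih, ← LinearMap.toMatrix_mulVec_repr b b (shift a)]
      simp only [wfaFun, List.map_cons, List.prod_cons, ← mulVec_mulVec, A,
        dotProduct_mulVec, vecMul_transpose]
  exact ⟨b.repr ⟨g, hg⟩, A, ω, funext fun u => key u ⟨g, hg⟩⟩

end WFA

theorem fliess_carlyle_paz_general {σ : Type*} (f : List σ → ℝ) :
    (∀ (n : ℕ) (α : Fin n → ℝ) (A : σ → Matrix (Fin n) (Fin n) ℝ) (ω : Fin n → ℝ),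
        (∀ u, f u = wfaFun α A ω u) → hankelRank f ≤ n) ∧
    (∀ n : ℕ, hankelRank f = n →
        ∃ (α : Fin n → ℝ) (A : σ → Matrix (Fin n) (Fin n) ℝ) (ω : Fin n → ℝ),
          ∀ u, f u = wfaFun α A ω u) := by
  refine ⟨fun n α A ω hf => ?_, fun n hrank => ?_⟩
  · obtain rfl : f = wfaFun α A ω := funext hf
    exact hankelRank_wfaFun_le α A ω
  · rw [hankelRank_eq_rank_hankelSpan] at hrank
    have := Module.finite_of_rank_eq_nat hrank
    let b := Module.finBasisOfFinrankEq ℝ (hankelSpan f) (Module.finrank_eq_of_rank_eq hrank)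
    obtain ⟨α, A, ω, hf⟩ :=
      exists_wfaFun_eq_of_mem (funLeft_cons_mem_hankelSpan f) b (self_mem_hankelSpan f)
    exact ⟨α, A, ω, congrFun hf⟩

/-- Fliess / Carlyle–Paz theorem: the rank of the Hankel matrix of `f` is a lower
bound on the number of states of any WFA computing `f`, and if this rank is a
finite number `n` then some `n`-state WFA computes `f`; hence `rank(H_f)` is the
minimal number of states of a WFA computing `f`. -/
theorem fliess_carlyle_paz {σ : Type*} [Fintype σ] (f : List σ → ℝ) :
    (∀ (n : ℕ) (α : Fin n → ℝ) (A : σ → Matrix (Fin n) (Fin n) ℝ) (ω : Fin n → ℝ),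
        (∀ u, f u = wfaFun α A ω u) → hankelRank f ≤ n) ∧
    (∀ n : ℕ, hankelRank f = n →
        ∃ (α : Fin n → ℝ) (A : σ → Matrix (Fin n) (Fin n) ℝ) (ω : Fin n → ℝ),
          ∀ u, f u = wfaFun α A ω u) :=
  fliess_carlyle_paz_general f
end

section
/- Let S = Σ_{k=0}^∞ α_k with α_k ≥ 0 for all k, and let τ be ℕ-valued with P(τ ≥ n) > 0 for all n. Then the Russian Roulette estimator Ŝ = Σ_{i=0}^τ α_i/P(τ ≥ i) is almost surely nonnegative and E[Ŝ] = S (allowing the value +∞ on both sides). -/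
open scoped ENNReal

open Finset

namespace ENNReal

/-- Tonelli on the triangle `i ≤ t`: a nonnegative double series can be summed in either order
without any summability hypothesis. -/
theorem tsum_mul_sum_range_succ (p g : ℕ → ℝ≥0∞) :
    ∑' t, p t * ∑ i ∈ range (t + 1), g i = ∑' i, g i * ∑' t, if i ≤ t then p t else 0 := by
  calc ∑' t, p t * ∑ i ∈ range (t + 1), g i
      = ∑' t, ∑' i, if i ≤ t then p t * g i else 0 := by
        refine tsum_congr fun t => ?_
        rw [sum_eq_tsum_indicator, ← ENNReal.tsum_mul_left]
        refine tsum_congr fun i => ?_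
        by_cases hi : i ≤ t <;> simp [hi]
    _ = ∑' i, ∑' t, if i ≤ t then p t * g i else 0 := ENNReal.tsum_comm
    _ = ∑' i, g i * ∑' t, if i ≤ t then p t else 0 := by
        refine tsum_congr fun i => ?_
        rw [← ENNReal.tsum_mul_left]
        refine tsum_congr fun t => ?_
        split_ifs <;> simp [mul_comm]

theorem tsum_ite_le_tsum (p : ℕ → ℝ≥0∞) (n : ℕ) :
    ∑' k, (if n ≤ k then p k else 0) ≤ ∑' k, p k :=
  ENNReal.tsum_le_tsum fun k => by split_ifs <;> simp

end ENNReal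

/-- Russian Roulette estimator for a series with nonnegative terms (values in
`ℝ≥0∞`, allowing `+∞` on both sides): the estimator is nonnegative and
`E[∑_{i=0}^τ α i / P(τ ≥ i)] = ∑ α k`. -/
theorem russian_roulette_unbiased_nonneg
    (α : ℕ → ℝ≥0∞)
    (p : ℕ → ℝ≥0∞) (hp1 : ∑' k, p k = 1)
    (tail : ℕ → ℝ≥0∞) (htail : ∀ n, tail n = ∑' k, if n ≤ k then p k else 0)
    (htailpos : ∀ n, 0 < tail n) :
    (∀ t : ℕ, 0 ≤ ∑ i ∈ Finset.range (t + 1), α i / tail i) ∧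
      ∑' t : ℕ, p t * (∑ i ∈ Finset.range (t + 1), α i / tail i) = ∑' k, α k := by
  refine ⟨fun t => zero_le, ?_⟩
  have htail_le_one : ∀ n, tail n ≤ 1 := fun n => by
    rw [htail n, ← hp1]
    exact ENNReal.tsum_ite_le_tsum p n
  rw [ENNReal.tsum_mul_sum_range_succ]
  refine tsum_congr fun i => ?_
  rw [← htail i, ENNReal.div_mul_cancel (htailpos i).ne'
    (ne_top_of_le_ne_top ENNReal.one_ne_top (htail_le_one i))]
end
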